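/- For all x > 0 and reals a, b with 0 < a ≤ b, the integral over t in (0, ∞) of cos(b t)·cos(a t) / (x² + t²) dt equals (π / (2x)) · e^{-b x} · cosh(a x). -/

import Mathlib

/-!
The Fourier transform of `t ↦ exp (-x |t|)` is `ξ ↦ 2x / (x² + (2πξ)²)`, so Fourier
inversion evaluated at `c` gives `∫ cos (c t) / (x² + t²) dt = (π / x) exp (-|c| x)` over the
real line, and half of that over `(0, ∞)` by evenness. Writing `cos (b t) cos (a t)` as the mean
of `cos ((b - a) t)` and `cos ((b + a) t)`, where `b - a` and `b + a` are nonnegative, the two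
exponentials combine into `exp (-b x) cosh (a x)`.
-/

open Real MeasureTheory

open Set FourierTransform

theorem integrable_exp_neg_mul_abs {x : ℝ} (hx : 0 < x) :
    Integrable fun t : ℝ => rexp (-x * |t|) := by
  rw [← integrableOn_univ, ← Iic_union_Ioi (a := (0 : ℝ))]
  refine IntegrableOn.union ?_ ?_
  · refine (integrableOn_exp_mul_Iic hx 0).congr_fun (fun t ht => ?_) measurableSet_Iic
    rw [abs_of_nonpos ht, neg_mul_neg]
  · refine (integrableOn_exp_mul_Ioi (neg_neg_of_pos hx) 0).congr_fun (fun t ht => ?_)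
      measurableSet_Ioi
    rw [abs_of_pos ht]

theorem integrable_inv_sq_add_sq {x : ℝ} (hx : x ≠ 0) :
    Integrable fun t : ℝ => (x ^ 2 + t ^ 2)⁻¹ := by
  refine ((integrable_inv_one_add_sq.comp_div hx).const_mul (x ^ 2)⁻¹).congr
    (Filter.Eventually.of_forall fun t => ?_)
  field_simp

theorem fourier_exp_neg_mul_abs {x : ℝ} (hx : 0 < x) (ξ : ℝ) :
    𝓕 (fun t : ℝ => (rexp (-x * |t|) : ℂ)) ξ = ((2 * x / (x ^ 2 + (2 * π * ξ) ^ 2) : ℝ) : ℂ) := by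
  set f := fun v : ℝ => Complex.exp (↑(-2 * π * v * ξ) * Complex.I) • (rexp (-x * |v|) : ℂ)
  have hIic : EqOn f (fun v : ℝ => Complex.exp ((x - 2 * π * ξ * Complex.I) * v)) (Iic 0) := by
    intro v hv
    simp only [f, smul_eq_mul, abs_of_nonpos (show v ≤ 0 from hv), Complex.ofReal_exp,
      ← Complex.exp_add]
    push_cast; ring_nf
  have hIoi : EqOn f (fun v : ℝ => Complex.exp ((-x - 2 * π * ξ * Complex.I) * v)) (Ioi 0) := by
    intro v hv
    simp only [f, smul_eq_mul, abs_of_pos (show 0 < v from hv), Complex.ofReal_exp,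
      ← Complex.exp_add]
    push_cast; ring_nf
  have hre₁ : 0 < (x - 2 * π * ξ * Complex.I).re := by simpa using hx
  have hre₂ : (-x - 2 * π * ξ * Complex.I).re < 0 := by simpa using hx
  rw [Real.fourier_real_eq_integral_exp_smul, ← intervalIntegral.integral_Iic_add_Ioi
    ((integrableOn_exp_mul_complex_Iic hre₁ 0).congr_fun hIic.symm measurableSet_Iic)
    ((integrableOn_exp_mul_complex_Ioi hre₂ 0).congr_fun hIoi.symm measurableSet_Ioi),
    setIntegral_congr_fun measurableSet_Iic hIic, setIntegral_congr_fun measurableSet_Ioi hIoi,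
    integral_exp_mul_complex_Iic hre₁, integral_exp_mul_complex_Ioi hre₂]
  have h₁ : (x - 2 * π * ξ * Complex.I : ℂ) ≠ 0 := fun h => by simp [h] at hre₁
  have h₂ : (-x - 2 * π * ξ * Complex.I : ℂ) ≠ 0 := fun h => by simp [h] at hre₂
  have h₃ : ((x ^ 2 + (2 * π * ξ) ^ 2 : ℝ) : ℂ) ≠ 0 := by norm_cast; positivity
  simp only [Complex.ofReal_zero, mul_zero, Complex.exp_zero]
  rw [Complex.ofReal_div, eq_div_iff h₃]
  field_simp
  push_cast
  linear_combination -2 * x * (2 * π * ξ) ^ 2 * Complex.I_sq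

theorem integrable_cos_mul_div_sq_add_sq {x : ℝ} (hx : x ≠ 0) (c : ℝ) :
    Integrable fun t : ℝ => cos (c * t) / (x ^ 2 + t ^ 2) := by
  have hpos (t : ℝ) : 0 < x ^ 2 + t ^ 2 := by positivity
  refine (integrable_inv_sq_add_sq hx).mono'
    ((Continuous.div (by fun_prop) (by fun_prop) fun t => (hpos t).ne').aestronglyMeasurable)
    (Filter.Eventually.of_forall fun t => ?_)
  rw [norm_div, norm_of_nonneg (hpos t).le, div_eq_mul_inv]
  exact mul_le_of_le_one_left (inv_nonneg.2 (hpos t).le) (abs_cos_le_one _)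

theorem integral_cos_mul_eq_of_fourier_eq_ofReal {f g : ℝ → ℝ} (hf : Continuous f)
    (hf_int : Integrable f) (hg_int : Integrable g)
    (hfg : 𝓕 (fun t => (f t : ℂ)) = fun ξ => (g ξ : ℂ)) (c : ℝ) :
    ∫ ξ, cos (2 * π * (c * ξ)) * g ξ = f c := by
  have hinv := congrFun ((by fun_prop : Continuous fun t => (f t : ℂ)).fourierInv_fourier_eq
    hf_int.ofReal (hfg ▸ hg_int.ofReal)) c
  rw [hfg, fourierInv_eq'] at hinv
  simp only [RCLike.inner_apply, conj_trivial, smul_eq_mul] at hinv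
  have hint : Integrable fun ξ : ℝ => Complex.exp (↑(2 * π * (c * ξ)) * Complex.I) * (g ξ : ℂ) :=
    hg_int.ofReal.bdd_mul (c := 1) (by fun_prop)
      (Filter.Eventually.of_forall fun ξ => (Complex.norm_exp_ofReal_mul_I _).le)
  have := congrArg Complex.re hinv
  rw [← RCLike.re_to_complex, ← integral_re hint] at this
  simpa only [RCLike.re_to_complex, Complex.re_mul_ofReal, Complex.exp_ofReal_mul_I_re,
    Complex.ofReal_re] using this

theorem integral_cos_mul_div_sq_add_sq {x : ℝ} (hx : 0 < x) (c : ℝ) :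
    ∫ t : ℝ, cos (c * t) / (x ^ 2 + t ^ 2) = π / x * rexp (-(|c| * x)) := by
  have hg_int : Integrable fun ξ : ℝ => 2 * x / (x ^ 2 + (2 * π * ξ) ^ 2) := by
    simp_rw [div_eq_mul_inv]
    exact ((integrable_inv_sq_add_sq hx.ne').comp_mul_left' (by positivity)).const_mul _
  have hinv := integral_cos_mul_eq_of_fourier_eq_ofReal (by fun_prop)
    (integrable_exp_neg_mul_abs hx) hg_int (funext (fourier_exp_neg_mul_abs hx)) c
  simp_rw [mul_left_comm (2 * π) c] at hinv
  have hsub := Measure.integral_comp_mul_left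
    (fun s => cos (c * s) * (2 * x / (x ^ 2 + s ^ 2))) (2 * π)
  rw [hinv, abs_of_pos (by positivity : (0 : ℝ) < (2 * π)⁻¹), smul_eq_mul] at hsub
  have hscale : ∫ s : ℝ, cos (c * s) * (2 * x / (x ^ 2 + s ^ 2))
      = 2 * x * ∫ s : ℝ, cos (c * s) / (x ^ 2 + s ^ 2) := by
    rw [← integral_const_mul]
    congr 1 with s
    ring
  rw [hscale, neg_mul, mul_comm x |c|] at hsub
  field_simp at hsub ⊢
  linear_combination -hsub

theorem integral_Ioi_cos_mul_div_sq_add_sq {x : ℝ} (hx : 0 < x) (c : ℝ) :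
    ∫ t in Ioi (0 : ℝ), cos (c * t) / (x ^ 2 + t ^ 2) = π / (2 * x) * rexp (-(|c| * x)) := by
  have heven (t : ℝ) : cos (c * |t|) / (x ^ 2 + |t| ^ 2) = cos (c * t) / (x ^ 2 + t ^ 2) := by
    rcases abs_choice t with h | h <;> simp only [h, mul_neg, cos_neg, neg_sq]
  have hfold := integral_comp_abs (f := fun t => cos (c * t) / (x ^ 2 + t ^ 2))
  simp only [heven, integral_cos_mul_div_sq_add_sq hx] at hfold
  field_simp at hfold ⊢
  linear_combination -hfold

theorem cos_cos_integral (a b x : ℝ) (hx : 0 < x) (ha : 0 < a) (hab : a ≤ b) :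
    ∫ t in Set.Ioi (0:ℝ), Real.cos (b * t) * Real.cos (a * t) / (x ^ 2 + t ^ 2)
      = (Real.pi / (2 * x)) * Real.exp (-b * x) * Real.cosh (a * x) := by
  have hsplit (t : ℝ) : cos (b * t) * cos (a * t) / (x ^ 2 + t ^ 2)
      = (cos ((b - a) * t) / (x ^ 2 + t ^ 2) + cos ((b + a) * t) / (x ^ 2 + t ^ 2)) / 2 := by
    rw [sub_mul, add_mul, ← add_div, ← two_mul_cos_mul_cos]
    ring
  simp_rw [hsplit]
  rw [integral_div, integral_add (integrable_cos_mul_div_sq_add_sq hx.ne' _).integrableOn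
    (integrable_cos_mul_div_sq_add_sq hx.ne' _).integrableOn,
    integral_Ioi_cos_mul_div_sq_add_sq hx, integral_Ioi_cos_mul_div_sq_add_sq hx,
    abs_of_nonneg (sub_nonneg.2 hab), abs_of_nonneg (by linarith), cosh_eq,
    show -((b - a) * x) = -b * x + a * x by ring, show -((b + a) * x) = -b * x + -(a * x) by ring,
    exp_add, exp_add]
  ring
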